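/- Let H ∈ ℍ[q₁,…,qₙ] be a nonzero polynomial that is not a unit, such that the principal right ideal ⟨H⟩ is radical and V_c(⟨H⟩) is irreducible. Then either H is irreducible, or there exists an irreducible polynomial Q ∈ ℍ[q₁,…,qₙ] with ⟨H⟩ = ⟨Q^s⟩ (i.e. H is, up to a multiplicative constant, the symmetrization of an irreducible polynomial). -/

import Mathlib

open scoped Quaternion

noncomputable section

/-- The quaternions. -/
abbrev ℍq : Type := Quaternion ℝ

/-- Slice regular polynomials in `n` quaternionic variables: formal polynomials with
quaternionic coefficients written on the right, with the slice (convolution) product. -/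
abbrev SP (n : ℕ) : Type := AddMonoidAlgebra ℍq (Fin n →₀ ℕ)

/-- Right ideals of `SP n`. -/
abbrev RIdeal (n : ℕ) := Submodule (SP n)ᵐᵒᵖ (SP n)

/-- Evaluation of a slice regular polynomial at a point of `ℍⁿ`:
`P(p) = ∑ p₁^{ℓ₁} ⋯ pₙ^{ℓₙ} a_{ℓ₁,…,ℓₙ}`. -/
def peval {n : ℕ} (p : Fin n → ℍq) (P : SP n) : ℍq :=
  Finsupp.sum P.coeff fun m a => (List.ofFn fun i => p i ^ m i).prod * a

/-- The regular conjugate `P^c`. -/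
def rconj {n : ℕ} (P : SP n) : SP n :=
  AddMonoidAlgebra.ofCoeff (Finsupp.mapRange (star : ℍq → ℍq) (star_zero _) P.coeff)

/-- The symmetrization `P^s = P * P^c`. -/
def symzn {n : ℕ} (P : SP n) : SP n := P * rconj P

/-- The sphere `𝕊` of quaternionic imaginary units. -/
def QSph : Set ℍq := {J | J ^ 2 = -1}

/-- The slice `ℂ_K = ℝ + ℝK`. -/
def CSlice (K : ℍq) : Set ℍq := {q | ∃ x y : ℝ, q = (x : ℍq) + (y : ℍq) * K}

/-- The points of `ℍⁿ` lying in some slice `ℂ_Kⁿ` (points with commuting components). -/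
def commSlice (n : ℕ) : Set (Fin n → ℍq) := {p | ∃ K ∈ QSph, ∀ i, p i ∈ CSlice K}

/-- The common zero set `V(I)` of a right ideal. -/
def Vq {n : ℕ} (I : RIdeal n) : Set (Fin n → ℍq) := {p | ∀ P ∈ I, peval p P = 0}

/-- `V_c(I) = V(I) ∩ ⋃_{K ∈ 𝕊} ℂ_Kⁿ`. -/
def Vc {n : ℕ} (I : RIdeal n) : Set (Fin n → ℍq) := Vq I ∩ commSlice n

/-- The spherical set `𝕊_a` of a point `a ∈ ℍⁿ`. -/
def SphSet {n : ℕ} (a : Fin n → ℍq) : Set (Fin n → ℍq) :=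
  {p | ∃ g : ℍq, g ≠ 0 ∧ ∀ i, p i = g⁻¹ * a i * g}

/-- The symmetrization `𝕊_Z = ⋃_{a ∈ Z} 𝕊_a` of a subset of `ℍⁿ`. -/
def SymmSet {n : ℕ} (Z : Set (Fin n → ℍq)) : Set (Fin n → ℍq) := ⋃ a ∈ Z, SphSet a

/-- `J(Z)`: the right ideal generated by the polynomials vanishing identically on `Z`. -/
def Jq {n : ℕ} (Z : Set (Fin n → ℍq)) : RIdeal n :=
  Submodule.span (SP n)ᵐᵒᵖ {P | ∀ p ∈ Z, peval p P = 0}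

/-- A right ideal is completely prime if `P*Q ∈ I` and `P*I ⊆ I` imply `P ∈ I` or `Q ∈ I`. -/
def CompletelyPrime {n : ℕ} (I : RIdeal n) : Prop :=
  ∀ P Q : SP n, P * Q ∈ I → (∀ R ∈ I, P * R ∈ I) → P ∈ I ∨ Q ∈ I

/-- The radical `√I`: the intersection of all completely prime right ideals containing `I`. -/
def radq {n : ℕ} (I : RIdeal n) : RIdeal n :=
  sInf {J : RIdeal n | CompletelyPrime J ∧ I ≤ J}

/-- A right ideal is quasi prime if `P*Q ∈ I` implies `P ∈ I` or `Q^s ∈ I`. -/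
def QuasiPrime {n : ℕ} (I : RIdeal n) : Prop :=
  ∀ P Q : SP n, P * Q ∈ I → P ∈ I ∨ symzn Q ∈ I

/-- A right ideal is two-sided if it is also closed under left multiplication. -/
def IsTwoSidedIdl {n : ℕ} (I : RIdeal n) : Prop :=
  ∀ P : SP n, ∀ Q ∈ I, P * Q ∈ I

/-- The symmetrized ideal `S(I)`: the right ideal generated by `{P^s : P ∈ I}`. -/
def SIdl {n : ℕ} (I : RIdeal n) : RIdeal n :=
  Submodule.span (SP n)ᵐᵒᵖ {Q | ∃ P ∈ I, Q = symzn P}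

/-- The product `I₁ * I₂`: the right ideal generated by `{P*Q : P ∈ I₁, Q ∈ I₂}`. -/
def prodIdl {n : ℕ} (I₁ I₂ : RIdeal n) : RIdeal n :=
  Submodule.span (SP n)ᵐᵒᵖ {x | ∃ P ∈ I₁, ∃ Q ∈ I₂, x = P * Q}

/-- Reducibility of the slice algebraic set `V_c(I)`. -/
def VcReducible {n : ℕ} (I : RIdeal n) : Prop :=
  ∃ I₁ I₂ : RIdeal n, I₁ ≠ ⊥ ∧ I₁ ≠ ⊤ ∧ I₂ ≠ ⊥ ∧ I₂ ≠ ⊤ ∧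
    ¬ I₁ ≤ I₂ ∧ ¬ I₂ ≤ I₁ ∧ Vc I = Vc I₁ ∪ Vc I₂

/-- Reducibility of the slice algebraic set `V(I)`. -/
def VReducible {n : ℕ} (I : RIdeal n) : Prop :=
  ∃ I₁ I₂ : RIdeal n, I₁ ≠ ⊥ ∧ I₁ ≠ ⊤ ∧ I₂ ≠ ⊥ ∧ I₂ ≠ ⊤ ∧
    ¬ I₁ ≤ I₂ ∧ ¬ I₂ ≤ I₁ ∧ Vq I = Vq I₁ ∪ Vq I₂

/-- An irreducible slice regular polynomial. -/
def IrredPoly {n : ℕ} (H : SP n) : Prop :=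
  H ≠ 0 ∧ ¬ IsUnit H ∧ ∀ P Q : SP n, H = P * Q → IsUnit P ∨ IsUnit Q

/-- The variable `q_i` as a slice regular polynomial. -/
def Xq {n : ℕ} (i : Fin n) : SP n := AddMonoidAlgebra.single (Finsupp.single i 1) 1

/-- A constant polynomial. -/
def Cq {n : ℕ} (a : ℍq) : SP n := AddMonoidAlgebra.single 0 a

/-- A polynomial has real coefficients. -/
def RealCoeffs {n : ℕ} (P : SP n) : Prop := ∀ m : Fin n →₀ ℕ, ∃ r : ℝ, P.coeff m = (r : ℍq)

/-! Factor `H = A * B` with `B` irreducible and `A` not a unit. On a slice,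
`(A * B)(p) = A(p) B(A(p)⁻¹ p A(p))` and `B^s` has real coefficients, so
`V_c(⟨H⟩) = V_c(⟨A⟩) ∪ V_c(⟨B^s, H⟩)`; the two ideals may be replaced by their radicals since
kernels of evaluation at slice points are completely prime. Every completely prime ideal
containing `H` contains `A` or `B^s`, so the two radicals meet inside `√⟨H⟩ = ⟨H⟩`, and
irreducibility of `V_c(⟨H⟩)` makes one of them contain the other. As `A ∉ ⟨H⟩`, this gives
`B^s = H W`; centrality of `B^s` turns this into `B^c = W A`, i.e. `B = A^c W^c`, so `W` is a
unit because `B` is irreducible. -/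

open AddMonoidAlgebra

lemma List.prod_ofFn_mul_of_commute {M : Type*} [Monoid M] {k : ℕ} (f g : Fin k → M)
    (h : ∀ i j, Commute (f i) (g j)) :
    (List.ofFn fun i => f i * g i).prod = (List.ofFn f).prod * (List.ofFn g).prod := by
  induction k with
  | zero => simp
  | succ k ih =>
    have hg : Commute (g 0) (List.ofFn fun i => f i.succ).prod :=
      Commute.list_prod_right _ _ fun x hx => by
        obtain ⟨i, rfl⟩ := List.mem_ofFn.1 hx
        exact (h _ _).symm
    simp only [List.ofFn_succ, List.prod_cons, ih _ _ fun i j => h _ _, mul_assoc,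
      hg.left_comm]

lemma AddMonoidAlgebra.supDegree_toLex_mul {R σ : Type*} [Semiring R] [NoZeroDivisors R]
    [LinearOrder σ] {f g : AddMonoidAlgebra R (σ →₀ ℕ)} (hf : f ≠ 0) (hg : g ≠ 0) :
    (f * g).supDegree toLex = f.supDegree toLex + g.supDegree toLex :=
  supDegree_mul toLex.injective (fun _ _ => rfl)
    (mul_ne_zero ((leadingCoeff_ne_zero toLex.injective).2 hf)
      ((leadingCoeff_ne_zero toLex.injective).2 hg)) hf hg

lemma AddMonoidAlgebra.supDegree_toLex_pos {R σ : Type*} [DivisionRing R] [LinearOrder σ]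
    {f : AddMonoidAlgebra R (σ →₀ ℕ)} (hf : f ≠ 0) (hu : ¬ IsUnit f) :
    0 < f.supDegree toLex := by
  refine pos_iff_ne_zero.2 fun h => hu ?_
  have hsupp : f.coeff.support ⊆ {0} := fun m hm => by
    have : toLex m ≤ 0 := h ▸ Finset.le_sup (f := toLex) hm
    simpa using this
  have hconst := Finsupp.support_subset_singleton.1 hsupp
  have hc : f.coeff 0 ≠ 0 := fun h0 => hf (coeff_injective (by rw [hconst, h0]; simp))
  rw [← ofCoeff_coeff f, hconst, ofCoeff_single]
  exact (isUnit_iff_ne_zero.2 hc).map (singleZeroRingHom (R := R))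

section Evaluation

variable {n : ℕ}

def monomialEval (p : Fin n → ℍq) (m : Fin n →₀ ℕ) : ℍq := (List.ofFn fun i => p i ^ m i).prod

lemma peval_eq_sum (p : Fin n → ℍq) (P : SP n) :
    peval p P = P.coeff.sum fun m a => monomialEval p m * a := rfl

def pevalAddHom (p : Fin n → ℍq) : SP n →+ ℍq where
  toFun := peval p
  map_zero' := by simp [peval]
  map_add' _ _ := Finsupp.sum_add_index' (by simp) fun _ _ _ => mul_add _ _ _

lemma peval_zero (p : Fin n → ℍq) : peval p 0 = 0 :=
  map_zero (pevalAddHom p)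

lemma peval_add (p : Fin n → ℍq) (f g : SP n) : peval p (f + g) = peval p f + peval p g :=
  map_add (pevalAddHom p) f g

lemma peval_sub (p : Fin n → ℍq) (f g : SP n) : peval p (f - g) = peval p f - peval p g :=
  map_sub (pevalAddHom p) f g

lemma peval_single (p : Fin n → ℍq) (m : Fin n →₀ ℕ) (a : ℍq) :
    peval p (single m a) = monomialEval p m * a := by
  simp [peval_eq_sum, coeff_single]

lemma monomialEval_zero (p : Fin n → ℍq) : monomialEval p 0 = 1 := by
  simp [monomialEval]

lemma monomialEval_single (p : Fin n → ℍq) (i : Fin n) :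
    monomialEval p (Finsupp.single i 1) = p i := by
  classical
  rw [monomialEval, List.ofFn_eq_map, List.prod_map_eq_pow_single i]
  · simp [List.count_finRange]
  · intro j hj _
    simp [Finsupp.single_eq_of_ne hj]

lemma monomialEval_add {p : Fin n → ℍq} (hp : ∀ i j, Commute (p i) (p j))
    (m m' : Fin n →₀ ℕ) :
    monomialEval p (m + m') = monomialEval p m * monomialEval p m' := by
  simp only [monomialEval, Finsupp.add_apply, pow_add]
  exact List.prod_ofFn_mul_of_commute _ _ fun i j => (hp i j).pow_pow _ _

lemma commute_monomialEval {p : Fin n → ℍq} (hp : ∀ i j, Commute (p i) (p j))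
    (m m' : Fin n →₀ ℕ) : Commute (monomialEval p m) (monomialEval p m') := by
  rw [Commute, SemiconjBy, ← monomialEval_add hp, ← monomialEval_add hp, add_comm]

lemma monomialEval_conj (p : Fin n → ℍq) {c : ℍq} (hc : c ≠ 0) (m : Fin n →₀ ℕ) :
    monomialEval (fun i => c⁻¹ * p i * c) m = c⁻¹ * monomialEval p m * c := by
  set u := ConjAct.toConjAct (Units.mk0 c hc)⁻¹
  have hu : ∀ x, u • x = c⁻¹ * x * c := fun x => by simp [u, ConjAct.units_smul_def]
  simp only [monomialEval, ← hu, ← smul_pow', List.smul_prod', List.map_ofFn]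
  rfl

lemma peval_mul_single {p : Fin n → ℍq} (hp : ∀ i j, Commute (p i) (p j)) (f : SP n)
    (m : Fin n →₀ ℕ) (b : ℍq) :
    peval p (f * single m b) = monomialEval p m * peval p f * b := by
  induction f using AddMonoidAlgebra.induction_linear with
  | zero => rw [zero_mul, peval_zero, mul_zero, zero_mul]
  | add f g hf hg => rw [add_mul, peval_add, peval_add, hf, hg, mul_add, add_mul]
  | single m' a =>
    rw [single_mul_single, peval_single, peval_single, monomialEval_add hp,
      (commute_monomialEval hp m' m).eq]
    simp only [mul_assoc]

lemma peval_mul {p : Fin n → ℍq} (hp : ∀ i j, Commute (p i) (p j)) (f g : SP n) :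
    peval p (f * g) = peval p f * peval (fun i => (peval p f)⁻¹ * p i * peval p f) g := by
  induction g using AddMonoidAlgebra.induction_linear with
  | zero => rw [mul_zero, peval_zero, peval_zero, mul_zero]
  | add g g' hg hg' => rw [mul_add, peval_add, peval_add, hg, hg', mul_add]
  | single m b =>
    rw [peval_mul_single hp, peval_single]
    rcases eq_or_ne (peval p f) 0 with hf | hf
    · simp [hf]
    · rw [monomialEval_conj p hf, mul_assoc, mul_assoc, mul_assoc, mul_inv_cancel_left₀ hf]

lemma peval_mul_eq_zero {p : Fin n → ℍq} (hp : ∀ i j, Commute (p i) (p j)) {f : SP n}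
    (hf : peval p f = 0) (g : SP n) : peval p (f * g) = 0 := by
  rw [peval_mul hp, hf, zero_mul]

lemma commute_conj {p : Fin n → ℍq} (hp : ∀ i j, Commute (p i) (p j)) {c : ℍq} (hc : c ≠ 0)
    (i j : Fin n) : Commute (c⁻¹ * p i * c) (c⁻¹ * p j * c) := by
  have hconj : ∀ x y : ℍq, c⁻¹ * x * c * (c⁻¹ * y * c) = c⁻¹ * (x * y) * c := fun x y => by
    simp only [mul_assoc, mul_inv_cancel_left₀ hc]
  rw [Commute, SemiconjBy, hconj, hconj, (hp i j).eq]

lemma commute_of_mem_commSlice {p : Fin n → ℍq} (hp : p ∈ commSlice n) (i j : Fin n) :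
    Commute (p i) (p j) := by
  obtain ⟨K, -, hK⟩ := hp
  obtain ⟨x, y, hx⟩ := hK i
  obtain ⟨x', y', hx'⟩ := hK j
  rw [hx, hx']
  have hK : ∀ r s : ℝ, Commute ((r : ℍq) + s * K) K := fun r s =>
    (Quaternion.coe_commute r K).add_left ((Quaternion.coe_commute s K).mul_left (.refl K))
  exact ((Quaternion.coe_commute x' _).symm).add_right
    ((Quaternion.coe_commute y' _).symm.mul_right (hK x y))

lemma peval_Xq (p : Fin n → ℍq) (i : Fin n) : peval p (Xq i) = p i := by
  rw [Xq, peval_single, monomialEval_single, mul_one]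

lemma peval_Cq (p : Fin n → ℍq) (a : ℍq) : peval p (Cq a) = a := by
  rw [Cq, peval_single, monomialEval_zero, one_mul]

end Evaluation

section RegularConjugate
variable {n : ℕ}

lemma coeff_rconj (f : SP n) (m : Fin n →₀ ℕ) : (rconj f).coeff m = star (f.coeff m) := rfl

@[simp] lemma rconj_single (m : Fin n →₀ ℕ) (a : ℍq) : rconj (single m a) = single m (star a) := by
  simp [rconj, coeff_single, Finsupp.mapRange_single, ofCoeff_single]

@[simp] lemma rconj_zero : rconj (0 : SP n) = 0 := by
  simp [rconj]

@[simp] lemma rconj_add (f g : SP n) : rconj (f + g) = rconj f + rconj g :=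
  congrArg ofCoeff (Finsupp.mapRange_add star_add f.coeff g.coeff)

@[simp] lemma rconj_rconj (f : SP n) : rconj (rconj f) = f := by
  ext m : 2
  simp [coeff_rconj]

@[simp] lemma rconj_one : rconj (1 : SP n) = 1 := by
  rw [one_def, rconj_single, star_one]

lemma rconj_mul (f g : SP n) : rconj (f * g) = rconj g * rconj f := by
  induction f using AddMonoidAlgebra.induction_linear with
  | zero => simp
  | add f f' hf hf' => simp [add_mul, mul_add, hf, hf']
  | single m a =>
    induction g using AddMonoidAlgebra.induction_linear with
    | zero => simp
    | add g g' hg hg' => simp [add_mul, mul_add, hg, hg']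
    | single m' b => simp [single_mul_single, add_comm]

lemma isUnit_rconj {f : SP n} (hf : IsUnit f) : IsUnit (rconj f) := by
  obtain ⟨g, hg⟩ := hf.exists_left_inv
  exact .of_mul_eq_one (rconj g) (by rw [← rconj_mul, hg, rconj_one])

lemma isUnit_rconj_iff {f : SP n} : IsUnit (rconj f) ↔ IsUnit f :=
  ⟨fun h => rconj_rconj f ▸ isUnit_rconj h, isUnit_rconj⟩

lemma realCoeffs_of_rconj_eq {f : SP n} (hf : rconj f = f) : RealCoeffs f := fun m =>
  ⟨(f.coeff m).re, Quaternion.star_eq_self.1 (by rw [← coeff_rconj, hf])⟩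

lemma realCoeffs_add_rconj (f : SP n) : RealCoeffs (f + rconj f) :=
  realCoeffs_of_rconj_eq (by rw [rconj_add, rconj_rconj, add_comm])

lemma realCoeffs_symzn (f : SP n) : RealCoeffs (symzn f) :=
  realCoeffs_of_rconj_eq (by rw [symzn, rconj_mul, rconj_rconj])

lemma RealCoeffs.commute {f : SP n} (hf : RealCoeffs f) (g : SP n) : Commute f g := by
  classical
  ext m : 2
  rw [coeff_mul, coeff_mul, Finsupp.sum_comm]
  refine Finsupp.sum_congr fun j _ => Finsupp.sum_congr fun i _ => ?_
  obtain ⟨r, hr⟩ := hf i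
  rw [add_comm j i, hr, Quaternion.coe_commutes]

/-- `f + f^c` is real, hence central, and `f^c = (f + f^c) - f` commutes with `f`. -/
lemma symzn_eq_rconj_mul (f : SP n) : symzn f = rconj f * f := by
  have h := (realCoeffs_add_rconj f).commute f
  rw [symzn, ← add_sub_cancel_left f (rconj f), mul_sub, sub_mul, h.eq]

lemma peval_conj_of_realCoeffs {f : SP n} (hf : RealCoeffs f) (p : Fin n → ℍq) {c : ℍq}
    (hc : c ≠ 0) : peval (fun i => c⁻¹ * p i * c) f = c⁻¹ * peval p f * c := by
  simp only [peval_eq_sum, Finsupp.sum, Finset.mul_sum, Finset.sum_mul, monomialEval_conj p hc]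
  refine Finset.sum_congr rfl fun m _ => ?_
  obtain ⟨r, hr⟩ := hf m
  simp only [hr, mul_assoc, ← Quaternion.coe_commutes r c]

end RegularConjugate

section Factorization
variable {n : ℕ}

lemma exists_nonunit_factors {H : SP n} (h0 : H ≠ 0) (hu : ¬ IsUnit H) (hH : ¬ IrredPoly H) :
    ∃ P Q : SP n, H = P * Q ∧ ¬ IsUnit P ∧ ¬ IsUnit Q := by
  unfold IrredPoly at hH
  push Not at hH
  exact hH h0 hu

lemma exists_mul_irredPoly {H : SP n} (h0 : H ≠ 0) (hu : ¬ IsUnit H) :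
    ∃ A B : SP n, H = A * B ∧ IrredPoly B := by
  induction hd : H.supDegree toLex using WellFoundedLT.induction generalizing H with
  | ind d ih =>
    by_cases hH : IrredPoly H
    · exact ⟨1, H, (one_mul H).symm, hH⟩
    obtain ⟨P, Q, rfl, hP, hQ⟩ := exists_nonunit_factors h0 hu hH
    have hP0 : P ≠ 0 := left_ne_zero_of_mul h0
    have hQ0 : Q ≠ 0 := right_ne_zero_of_mul h0
    have hlt : Q.supDegree toLex < d := by
      rw [← hd, supDegree_toLex_mul hP0 hQ0]
      exact lt_add_of_pos_left _ (supDegree_toLex_pos hP0 hP)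
    obtain ⟨A, B, rfl, hB⟩ := ih _ hlt hQ0 hQ rfl
    exact ⟨P * A, B, (mul_assoc _ _ _).symm, hB⟩

lemma exists_nonunit_mul_irredPoly {H : SP n} (h0 : H ≠ 0) (hu : ¬ IsUnit H)
    (hH : ¬ IrredPoly H) : ∃ A B : SP n, H = A * B ∧ ¬ IsUnit A ∧ IrredPoly B := by
  obtain ⟨P, Q, rfl, hP, hQ⟩ := exists_nonunit_factors h0 hu hH
  obtain ⟨A, B, rfl, hB⟩ := exists_mul_irredPoly (right_ne_zero_of_mul h0) hQ
  exact ⟨P * A, B, (mul_assoc _ _ _).symm, fun h => hP (isUnit_of_mul_isUnit_left h), hB⟩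

end Factorization

section ZeroSets
variable {n : ℕ}

lemma mem_span_singleton_iff {x y : SP n} :
    x ∈ Submodule.span (SP n)ᵐᵒᵖ {y} ↔ ∃ c : SP n, y * c = x := by
  simp [Submodule.mem_span_singleton, MulOpposite.exists]

lemma RIdeal.mul_mem {I : RIdeal n} {x : SP n} (hx : x ∈ I) (c : SP n) : x * c ∈ I :=
  I.smul_mem (MulOpposite.op c) hx

lemma not_mem_span_mul {A B : SP n} (hA : A ≠ 0) (hB : ¬ IsUnit B) :
    A ∉ Submodule.span (SP n)ᵐᵒᵖ {A * B} := by
  intro h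
  obtain ⟨c, hc⟩ := mem_span_singleton_iff.1 h
  exact hB (.of_mul_eq_one c (mul_left_cancel₀ hA (by rw [← mul_assoc, hc, mul_one])))

def pevalKer (p : Fin n → ℍq) (hp : ∀ i j, Commute (p i) (p j)) : RIdeal n where
  carrier := {f | peval p f = 0}
  add_mem' {f g} hf hg := (peval_add p f g).trans (by rw [hf, hg, add_zero])
  zero_mem' := peval_zero p
  smul_mem' c f hf := peval_mul_eq_zero hp hf c.unop

lemma mem_pevalKer {p : Fin n → ℍq} {hp : ∀ i j, Commute (p i) (p j)} {f : SP n} :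
    f ∈ pevalKer p hp ↔ peval p f = 0 := Iff.rfl

/-- Applied to `q_i - p_i`, the hypothesis `P * I ⊆ I` gives `P(p)⁻¹ p_i P(p) = p_i` when
`P(p) ≠ 0`, so that `(P * Q)(p) = P(p) Q(p)`. -/
lemma completelyPrime_pevalKer (p : Fin n → ℍq) (hp : ∀ i j, Commute (p i) (p j)) :
    CompletelyPrime (pevalKer p hp) := by
  intro P Q hPQ hPI
  by_cases hP : peval p P = 0
  · exact Or.inl hP
  have hfix : (fun i => (peval p P)⁻¹ * p i * peval p P) = p := by
    funext i
    have hXi : Xq i - Cq (p i) ∈ pevalKer p hp := by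
      rw [mem_pevalKer, peval_sub, peval_Xq, peval_Cq, sub_self]
    have := hPI _ hXi
    rw [mem_pevalKer, peval_mul hp, peval_sub, peval_Xq, peval_Cq] at this
    exact sub_eq_zero.1 ((mul_eq_zero.1 this).resolve_left hP)
  right
  rw [mem_pevalKer, peval_mul hp, hfix] at hPQ
  exact (mul_eq_zero.1 hPQ).resolve_left hP

lemma mem_Vq_iff_le_pevalKer {I : RIdeal n} {p : Fin n → ℍq} (hp : ∀ i j, Commute (p i) (p j)) :
    p ∈ Vq I ↔ I ≤ pevalKer p hp := Iff.rfl

lemma mem_Vc_span_iff {S : Set (SP n)} {p : Fin n → ℍq} :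
    p ∈ Vc (Submodule.span (SP n)ᵐᵒᵖ S) ↔ p ∈ commSlice n ∧ ∀ f ∈ S, peval p f = 0 := by
  refine ⟨fun ⟨hV, hp⟩ => ⟨hp, fun f hf => hV f (Submodule.subset_span hf)⟩, fun ⟨hp, hS⟩ => ?_⟩
  exact ⟨(mem_Vq_iff_le_pevalKer (commute_of_mem_commSlice hp)).2 (Submodule.span_le.2 hS), hp⟩

lemma Vc_anti {I J : RIdeal n} (h : I ≤ J) : Vc J ⊆ Vc I :=
  fun _ ⟨hV, hp⟩ => ⟨fun f hf => hV f (h hf), hp⟩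

lemma le_radq (I : RIdeal n) : I ≤ radq I :=
  le_sInf fun _ hJ => hJ.2

lemma radq_le {I J : RIdeal n} (hJ : CompletelyPrime J) (hle : I ≤ J) : radq I ≤ J :=
  sInf_le ⟨hJ, hle⟩

lemma Vc_radq (I : RIdeal n) : Vc (radq I) = Vc I := by
  refine (Vc_anti (le_radq I)).antisymm fun p ⟨hV, hp⟩ => ⟨?_, hp⟩
  have hp' := commute_of_mem_commSlice hp
  exact (mem_Vq_iff_le_pevalKer hp').2 (radq_le (completelyPrime_pevalKer p hp') hV)

lemma le_or_le_of_not_VcReducible {I I₁ I₂ : RIdeal n} (hI : ¬ VcReducible I)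
    (hcover : Vc I = Vc I₁ ∪ Vc I₂) (h₁ : I₁ ≠ ⊥) (h₂ : I₂ ≠ ⊥) : I₁ ≤ I₂ ∨ I₂ ≤ I₁ := by
  by_contra! h
  exact hI ⟨I₁, I₂, h₁, fun htop => h.2 (htop ▸ le_top), h₂, fun htop => h.1 (htop ▸ le_top),
    h.1, h.2, hcover⟩

end ZeroSets

section Symmetrization
variable {n : ℕ}

lemma symzn_mem_or_mem {J : RIdeal n} (hJ : CompletelyPrime J) {A B : SP n} (hAB : A * B ∈ J) :
    symzn B ∈ J ∨ A ∈ J := by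
  have hcentral := (realCoeffs_symzn B).commute
  refine hJ _ _ ?_ fun R hR => (hcentral R).eq ▸ RIdeal.mul_mem hR _
  rw [(hcentral A).eq, symzn, ← mul_assoc]
  exact RIdeal.mul_mem hAB _

lemma inf_radq_le_radq (A B : SP n) :
    radq (Submodule.span (SP n)ᵐᵒᵖ {A}) ⊓ radq (Submodule.span (SP n)ᵐᵒᵖ {symzn B, A * B})
      ≤ radq (Submodule.span (SP n)ᵐᵒᵖ {A * B}) := by
  rintro x ⟨hxA, hxS⟩
  refine Submodule.mem_sInf.2 fun J ⟨hJ, hle⟩ => ?_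
  have hAB : A * B ∈ J := hle (Submodule.mem_span_singleton_self _)
  rcases symzn_mem_or_mem hJ hAB with hS | hA
  · refine radq_le hJ ?_ hxS
    exact Submodule.span_le.2 (Set.insert_subset hS (Set.singleton_subset_iff.2 hAB))
  · exact radq_le hJ (Submodule.span_le.2 (Set.singleton_subset_iff.2 hA)) hxA

lemma peval_symzn_eq_zero {p : Fin n → ℍq} (hp : ∀ i j, Commute (p i) (p j)) {A B : SP n}
    (hA : peval p A ≠ 0) (hAB : peval p (A * B) = 0) : peval p (symzn B) = 0 := by
  set c := peval p A
  have hB : peval (fun i => c⁻¹ * p i * c) B = 0 := by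
    rw [peval_mul hp] at hAB
    exact (mul_eq_zero.1 hAB).resolve_left hA
  have hS := peval_mul_eq_zero (commute_conj hp hA) hB (rconj B)
  rw [← symzn, peval_conj_of_realCoeffs (realCoeffs_symzn B) p hA] at hS
  simpa [hA] using hS

lemma Vc_span_mul (A B : SP n) :
    Vc (Submodule.span (SP n)ᵐᵒᵖ {A * B}) =
      Vc (Submodule.span (SP n)ᵐᵒᵖ {A}) ∪ Vc (Submodule.span (SP n)ᵐᵒᵖ {symzn B, A * B}) := by
  ext p
  simp only [Set.mem_union, mem_Vc_span_iff, Set.mem_insert_iff, Set.mem_singleton_iff,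
    forall_eq_or_imp, forall_eq]
  constructor
  · rintro ⟨hp, hAB⟩
    by_cases hA : peval p A = 0
    · exact Or.inl ⟨hp, hA⟩
    · exact Or.inr ⟨hp, peval_symzn_eq_zero (commute_of_mem_commSlice hp) hA hAB, hAB⟩
  · rintro (⟨hp, hA⟩ | ⟨hp, -, hAB⟩)
    · exact ⟨hp, peval_mul_eq_zero (commute_of_mem_commSlice hp) hA B⟩
    · exact ⟨hp, hAB⟩

lemma symzn_mem_span_of_radical {A B : SP n} (hAB : A * B ≠ 0) (hB : ¬ IsUnit B)
    (hrad : radq (Submodule.span (SP n)ᵐᵒᵖ {A * B}) = Submodule.span (SP n)ᵐᵒᵖ {A * B})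
    (hirr : ¬ VcReducible (Submodule.span (SP n)ᵐᵒᵖ {A * B})) :
    symzn B ∈ Submodule.span (SP n)ᵐᵒᵖ {A * B} := by
  set I₁ := radq (Submodule.span (SP n)ᵐᵒᵖ {A})
  set I₂ := radq (Submodule.span (SP n)ᵐᵒᵖ {symzn B, A * B})
  have hA : A ∈ I₁ := le_radq _ (Submodule.mem_span_singleton_self A)
  have hS : symzn B ∈ I₂ := le_radq _ (Submodule.subset_span (Set.mem_insert _ _))
  have hAB₂ : A * B ∈ I₂ := le_radq _ (Submodule.subset_span (Set.mem_insert_of_mem _ rfl))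
  have hmeet : I₁ ⊓ I₂ ≤ Submodule.span (SP n)ᵐᵒᵖ {A * B} := hrad ▸ inf_radq_le_radq A B
  have hcover : Vc (Submodule.span (SP n)ᵐᵒᵖ {A * B}) = Vc I₁ ∪ Vc I₂ := by
    rw [Vc_radq, Vc_radq, Vc_span_mul]
  rcases le_or_le_of_not_VcReducible hirr hcover
    (Submodule.ne_bot_iff _ |>.2 ⟨A, hA, left_ne_zero_of_mul hAB⟩)
    (Submodule.ne_bot_iff _ |>.2 ⟨A * B, hAB₂, hAB⟩) with h | h
  · exact absurd (hmeet ⟨hA, h hA⟩) (not_mem_span_mul (left_ne_zero_of_mul hAB) hB)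
  · exact hmeet ⟨h hS, hS⟩

lemma isUnit_of_mul_eq_symzn {A B W : SP n} (hAB : A * B ≠ 0) (hA : ¬ IsUnit A)
    (hB : IrredPoly B) (hW : A * B * W = symzn B) : IsUnit W := by
  have hcomm : W * (A * B) = A * B * W :=
    mul_left_cancel₀ hAB (by rw [← mul_assoc, hW, ((realCoeffs_symzn B).commute _).eq, ← hW])
  have hconj : rconj B = W * A :=
    mul_right_cancel₀ hB.1 (by rw [← symzn_eq_rconj_mul, ← hW, ← hcomm, mul_assoc])
  have hfac : B = rconj A * rconj W := by rw [← rconj_mul, ← hconj, rconj_rconj]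
  rcases hB.2.2 _ _ hfac with h | h
  · exact absurd (isUnit_rconj_iff.1 h) hA
  · exact isUnit_rconj_iff.1 h

end Symmetrization

/-- If `⟨H⟩` is radical and `V_c(⟨H⟩)` is irreducible, then `H` is
irreducible or `H` is (up to a constant) the symmetrization of an irreducible polynomial. -/
theorem stmt17 {n : ℕ} (H : SP n) (h0 : H ≠ 0) (hu : ¬ IsUnit H)
    (hrad : radq (Submodule.span (SP n)ᵐᵒᵖ {H}) = Submodule.span (SP n)ᵐᵒᵖ {H})
    (hirr : ¬ VcReducible (Submodule.span (SP n)ᵐᵒᵖ {H})) :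
    IrredPoly H ∨ ∃ Q : SP n, IrredPoly Q ∧
      Submodule.span (SP n)ᵐᵒᵖ {H} = Submodule.span (SP n)ᵐᵒᵖ {symzn Q} := by
  by_cases hH : IrredPoly H
  · exact Or.inl hH
  obtain ⟨A, B, rfl, hA, hB⟩ := exists_nonunit_mul_irredPoly h0 hu hH
  obtain ⟨W, hW⟩ := mem_span_singleton_iff.1 (symzn_mem_span_of_radical h0 hB.2.1 hrad hirr)
  refine Or.inr ⟨B, hB, ?_⟩
  rw [← hW, ← op_smul_eq_mul]
  exact (Submodule.span_singleton_smul_eq (isUnit_of_mul_eq_symzn h0 hA hB hW).op _).symm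

end
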